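/- Let g₁(x) = e^{2πix}·p(x+1/2) for x ∈ [-2/7, 2/7) and 0 elsewhere in [-1/2,1/2), and g₂(x) = −e^{2πix}·p(x) for x ∈ [-1/7, 1/7) and 0 elsewhere (both 1-periodic), where p is real, even, 1-periodic, C^∞, vanishes on [1/7,3/14] ∪ [3/7,1/2], and satisfies p(x)² + p(x+1/2)² = 2. Then for all x: Σ_{j=1}^2 [ |g_j(x/2)|² + |g_j((x+1)/2)|² ] = 2. -/

import Mathlib

/-- The 1-periodization of a set `S ⊆ ℝ`. -/
def per (S : Set ℝ) : Set ℝ := {x | ∃ k : ℤ, x + k ∈ S}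

/-- `g₁(x) = e^{2πix}·p(x+1/2)` for `x ∈ [-2/7, 2/7)` mod 1 and `0` otherwise. -/
noncomputable def g1 (p : ℝ → ℝ) : ℝ → ℂ :=
  Set.indicator (per (Set.Ico (-2/7) (2/7)))
    (fun x => Complex.exp (2 * Real.pi * Complex.I * x) * (p (x + 1/2) : ℂ))

/-- `g₂(x) = -e^{2πix}·p(x)` for `x ∈ [-1/7, 1/7)` mod 1 and `0` otherwise. -/
noncomputable def g2 (p : ℝ → ℝ) : ℝ → ℂ :=
  Set.indicator (per (Set.Ico (-1/7) (1/7)))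
    (fun x => -(Complex.exp (2 * Real.pi * Complex.I * x)) * (p x : ℂ))

lemma p_int (p : ℝ → ℝ) (hper : ∀ x, p (x + 1) = p x) (n : ℤ) (x : ℝ) :
    p (x + n) = p x := by
  have hP : Function.Periodic p 1 := hper
  simpa using (hP.int_mul n) x

lemma mem_per_add_int (S : Set ℝ) (x : ℝ) (n : ℤ) : x + n ∈ per S ↔ x ∈ per S := by
  constructor
  · rintro ⟨k, hk⟩
    refine ⟨n + k, ?_⟩
    have : x + ((n : ℤ) + k : ℤ) = x + n + k := by push_cast; ring
    rw [this]; exact hk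
  · rintro ⟨k, hk⟩
    refine ⟨k - n, ?_⟩
    have : x + n + ((k : ℤ) - n : ℤ) = x + k := by push_cast; ring
    rw [this]; exact hk

lemma mem_per_Ico {a b y : ℝ} (ha : -(1/2) ≤ a) (hb : b ≤ 1/2)
    (hy1 : -(1/2) ≤ y) (hy2 : y < 1/2) :
    y ∈ per (Set.Ico a b) ↔ (a ≤ y ∧ y < b) := by
  constructor
  · rintro ⟨k, h1, h2⟩
    have l1 : (-1 : ℝ) < k := by linarith
    have l2 : (k : ℝ) < 1 := by linarith
    have k1 : (-1 : ℤ) < k := by exact_mod_cast l1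
    have k2 : k < 1 := by exact_mod_cast l2
    have : k = 0 := by omega
    subst this
    simp at h1 h2
    exact ⟨h1, h2⟩
  · rintro ⟨h1, h2⟩; exact ⟨0, by simpa using ⟨h1, h2⟩⟩

lemma norm_exp_two_pi (x : ℝ) : ‖Complex.exp (2 * Real.pi * Complex.I * x)‖ = 1 := by
  rw [show (2 * (Real.pi : ℂ) * Complex.I * x) = ((2 * Real.pi * x : ℝ) : ℂ) * Complex.I by
    push_cast; ring]
  rw [Complex.norm_exp_ofReal_mul_I]

lemma norm_g1_sq_mem (p : ℝ → ℝ) {u : ℝ} (h : u ∈ per (Set.Ico (-2/7) (2/7))) :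
    ‖g1 p u‖ ^ 2 = p (u + 1/2) ^ 2 := by
  rw [g1, Set.indicator_of_mem h, norm_mul, norm_exp_two_pi, one_mul,
    Complex.norm_real, Real.norm_eq_abs, sq_abs]

lemma norm_g1_sq_not_mem (p : ℝ → ℝ) {u : ℝ} (h : u ∉ per (Set.Ico (-2/7) (2/7))) :
    ‖g1 p u‖ ^ 2 = 0 := by
  rw [g1, Set.indicator_of_notMem h, norm_zero]; ring

lemma norm_g2_sq_mem (p : ℝ → ℝ) {u : ℝ} (h : u ∈ per (Set.Ico (-1/7) (1/7))) :
    ‖g2 p u‖ ^ 2 = p u ^ 2 := by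
  rw [g2, Set.indicator_of_mem h, norm_mul, norm_neg, norm_exp_two_pi, one_mul,
    Complex.norm_real, Real.norm_eq_abs, sq_abs]

lemma norm_g2_sq_not_mem (p : ℝ → ℝ) {u : ℝ} (h : u ∉ per (Set.Ico (-1/7) (1/7))) :
    ‖g2 p u‖ ^ 2 = 0 := by
  rw [g2, Set.indicator_of_notMem h, norm_zero]; ring

lemma g1_add_int (p : ℝ → ℝ) (hper : ∀ x, p (x + 1) = p x) (t : ℝ) (n : ℤ) :
    g1 p (t + n) = g1 p t := by
  by_cases h : t ∈ per (Set.Ico (-2/7 : ℝ) (2/7))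
  · rw [g1, Set.indicator_of_mem ((mem_per_add_int _ t n).mpr h), Set.indicator_of_mem h]
    have hv : p (t + (n : ℝ) + 1/2) = p (t + 1/2) := by
      rw [show t + (n : ℝ) + 1/2 = (t + 1/2) + n by ring, p_int p hper]
    rw [hv]
    congr 1
    rw [show (2 * (Real.pi : ℂ) * Complex.I * ((t + (n : ℝ) : ℝ) : ℂ))
        = 2 * Real.pi * Complex.I * (t : ℂ) + n * (2 * Real.pi * Complex.I) by
      push_cast; ring]
    rw [Complex.exp_add, Complex.exp_int_mul_two_pi_mul_I, mul_one]
  · rw [g1, Set.indicator_of_notMem ((mem_per_add_int _ t n).not.mpr h),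
      Set.indicator_of_notMem h]

lemma g2_add_int (p : ℝ → ℝ) (hper : ∀ x, p (x + 1) = p x) (t : ℝ) (n : ℤ) :
    g2 p (t + n) = g2 p t := by
  by_cases h : t ∈ per (Set.Ico (-1/7 : ℝ) (1/7))
  · rw [g2, Set.indicator_of_mem ((mem_per_add_int _ t n).mpr h), Set.indicator_of_mem h]
    have hv : p (t + (n : ℝ)) = p t := p_int p hper n t
    rw [hv]
    congr 2
    rw [show (2 * (Real.pi : ℂ) * Complex.I * ((t + (n : ℝ) : ℝ) : ℂ))
        = 2 * Real.pi * Complex.I * (t : ℂ) + n * (2 * Real.pi * Complex.I) by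
      push_cast; ring]
    rw [Complex.exp_add, Complex.exp_int_mul_two_pi_mul_I, mul_one]
  · rw [g2, Set.indicator_of_notMem ((mem_per_add_int _ t n).not.mpr h),
      Set.indicator_of_notMem h]

set_option maxHeartbeats 1000000 in
lemma core (p : ℝ → ℝ)
    (hper : ∀ x, p (x + 1) = p x)
    (heven : ∀ x, p (-x) = p x)
    (hqmf : ∀ x, p x ^ 2 + p (x + 1/2) ^ 2 = 2)
    (hvan : ∀ x ∈ Set.Icc (1/7 : ℝ) (3/14) ∪ Set.Icc (3/7 : ℝ) (1/2), p x = 0)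
    (u : ℝ) (h1 : -(1/2) ≤ u) (h2 : u < 0) :
    ‖g1 p u‖ ^ 2 + ‖g2 p u‖ ^ 2 + ‖g1 p (u + 1/2)‖ ^ 2 + ‖g2 p (u + 1/2)‖ ^ 2 = 2 := by
  have hv1 : -(1/2 : ℝ) ≤ u + 1/2 := by linarith
  have hv2 : u + 1/2 < 1/2 := by linarith
  have hA : ∀ {y : ℝ}, -(1/2) ≤ y → y < 1/2 →
      (y ∈ per (Set.Ico (-2/7) (2/7)) ↔ (-2/7 ≤ y ∧ y < 2/7)) := fun hy1 hy2 =>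
    mem_per_Ico (by norm_num) (by norm_num) hy1 hy2
  have hB : ∀ {y : ℝ}, -(1/2) ≤ y → y < 1/2 →
      (y ∈ per (Set.Ico (-1/7) (1/7)) ↔ (-1/7 ≤ y ∧ y < 1/7)) := fun hy1 hy2 =>
    mem_per_Ico (by norm_num) (by norm_num) hy1 hy2
  rcases lt_or_ge u (-(5/14)) with c1 | c1
  · -- u ∈ [-1/2, -5/14): only v-terms; v ∈ A and B
    rw [norm_g1_sq_not_mem p (by rw [hA h1 (by linarith : u < 1/2)]; rintro ⟨ha, _⟩; linarith),
      norm_g2_sq_not_mem p (by rw [hB h1 (by linarith : u < 1/2)]; rintro ⟨ha, _⟩; linarith),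
      norm_g1_sq_mem p ((hA hv1 hv2).mpr ⟨by linarith, by linarith⟩),
      norm_g2_sq_mem p ((hB hv1 hv2).mpr ⟨by linarith, by linarith⟩)]
    have e1 : p (u + 1/2 + 1/2) = p u := by rw [show u + 1/2 + 1/2 = u + 1 by ring, hper]
    rw [e1]
    have := hqmf u
    linarith
  rcases lt_or_ge u (-(2/7)) with c2 | c2
  · -- u ∈ [-5/14, -2/7): only v ∈ A; p(u+1/2) = 0
    rw [norm_g1_sq_not_mem p (by rw [hA h1 (by linarith : u < 1/2)]; rintro ⟨ha, _⟩; linarith),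
      norm_g2_sq_not_mem p (by rw [hB h1 (by linarith : u < 1/2)]; rintro ⟨ha, _⟩; linarith),
      norm_g1_sq_mem p ((hA hv1 hv2).mpr ⟨by linarith, by linarith⟩),
      norm_g2_sq_not_mem p (by rw [hB hv1 hv2]; rintro ⟨_, hb⟩; linarith)]
    have e1 : p (u + 1/2 + 1/2) = p u := by rw [show u + 1/2 + 1/2 = u + 1 by ring, hper]
    rw [e1]
    have hz : p (u + 1/2) = 0 := hvan _ (Or.inl ⟨by linarith, by linarith⟩)
    have := hqmf u
    nlinarith [hz]
  rcases lt_or_ge u (-(3/14)) with c3 | c3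
  · -- u ∈ [-2/7, -3/14): u ∈ A, v ∈ A
    rw [norm_g1_sq_mem p ((hA h1 (by linarith : u < 1/2)).mpr ⟨by linarith, by linarith⟩),
      norm_g2_sq_not_mem p (by rw [hB h1 (by linarith : u < 1/2)]; rintro ⟨ha, _⟩; linarith),
      norm_g1_sq_mem p ((hA hv1 hv2).mpr ⟨by linarith, by linarith⟩),
      norm_g2_sq_not_mem p (by rw [hB hv1 hv2]; rintro ⟨_, hb⟩; linarith)]
    have e1 : p (u + 1/2 + 1/2) = p u := by rw [show u + 1/2 + 1/2 = u + 1 by ring, hper]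
    rw [e1]
    have := hqmf u
    linarith
  rcases lt_or_ge u (-(1/7)) with c4 | c4
  · -- u ∈ [-3/14, -1/7): u ∈ A only; p(u) = 0 by evenness
    rw [norm_g1_sq_mem p ((hA h1 (by linarith : u < 1/2)).mpr ⟨by linarith, by linarith⟩),
      norm_g2_sq_not_mem p (by rw [hB h1 (by linarith : u < 1/2)]; rintro ⟨ha, _⟩; linarith),
      norm_g1_sq_not_mem p (by rw [hA hv1 hv2]; rintro ⟨_, hb⟩; linarith),
      norm_g2_sq_not_mem p (by rw [hB hv1 hv2]; rintro ⟨_, hb⟩; linarith)]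
    have hz : p u = 0 := by
      rw [← heven u]; exact hvan _ (Or.inl ⟨by linarith, by linarith⟩)
    have := hqmf u
    nlinarith [hz]
  · -- u ∈ [-1/7, 0): u ∈ A and B
    rw [norm_g1_sq_mem p ((hA h1 (by linarith : u < 1/2)).mpr ⟨by linarith, by linarith⟩),
      norm_g2_sq_mem p ((hB h1 (by linarith : u < 1/2)).mpr ⟨by linarith, by linarith⟩),
      norm_g1_sq_not_mem p (by rw [hA hv1 hv2]; rintro ⟨_, hb⟩; linarith),
      norm_g2_sq_not_mem p (by rw [hB hv1 hv2]; rintro ⟨_, hb⟩; linarith)]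
    have := hqmf u
    linarith

/-- With `p` real, even, 1-periodic, `C^∞`, vanishing on
`[1/7,3/14] ∪ [3/7,1/2]` and satisfying `p(x)² + p(x+1/2)² = 2`, the
generalized high-pass filters `g₁, g₂` satisfy
`Σ_{j=1}^2 [|g_j(x/2)|² + |g_j((x+1)/2)|²] = 2` for all `x`. -/
theorem stmt19 (p : ℝ → ℝ)
    (hsm : ContDiff ℝ (⊤ : ℕ∞) p)
    (hper : ∀ x, p (x + 1) = p x)
    (heven : ∀ x, p (-x) = p x)
    (hqmf : ∀ x, p x ^ 2 + p (x + 1/2) ^ 2 = 2)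
    (hvan : ∀ x ∈ Set.Icc (1/7 : ℝ) (3/14) ∪ Set.Icc (3/7 : ℝ) (1/2), p x = 0) :
    ∀ x : ℝ,
      ‖g1 p (x/2)‖ ^ 2 + ‖g2 p (x/2)‖ ^ 2 +
        ‖g1 p ((x+1)/2)‖ ^ 2 + ‖g2 p ((x+1)/2)‖ ^ 2 = 2 := by
  intro x
  set y : ℝ := x / 2 with hy
  set n : ℤ := ⌊y + 1/2⌋ with hn
  set t : ℝ := y - n with ht
  have ht1 : -(1/2 : ℝ) ≤ t := by
    have := Int.floor_le (y + 1/2); simp only [ht, hn]; linarith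
  have ht2 : t < 1/2 := by
    have := Int.lt_floor_add_one (y + 1/2); simp only [ht, hn]; linarith
  have ey : y = t + n := by ring
  have ey2 : (x + 1) / 2 = (t + 1/2) + n := by
    have : (x + 1) / 2 = y + 1/2 := by rw [hy]; ring
    rw [this, ey]; ring
  rw [ey, ey2, g1_add_int p hper, g2_add_int p hper,
    g1_add_int p hper, g2_add_int p hper]
  rcases lt_or_ge t 0 with hc | hc
  · exact core p hper heven hqmf hvan t ht1 hc
  · have h := core p hper heven hqmf hvan (t - 1/2) (by linarith) (by linarith)
    have e1 : g1 p (t + 1/2) = g1 p (t - 1/2) := by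
      rw [show t + 1/2 = (t - 1/2) + ((1 : ℤ) : ℝ) by push_cast; ring,
        g1_add_int p hper]
    have e2 : g2 p (t + 1/2) = g2 p (t - 1/2) := by
      rw [show t + 1/2 = (t - 1/2) + ((1 : ℤ) : ℝ) by push_cast; ring,
        g2_add_int p hper]
    have e3 : g1 p t = g1 p ((t - 1/2) + 1/2) := by norm_num
    have e4 : g2 p t = g2 p ((t - 1/2) + 1/2) := by norm_num
    rw [e1, e2, e3, e4]
    linarith
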